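/- For all n ≥ 1, inv(n) ≥ ⌊(n−1)/2 − log₂(n)⌋, where inv(n) is the maximum inversion number of an n-vertex tournament. More precisely, if k is an integer with 2^{n(n−1)/2} > n! · 2^{n(k−1)}, then inv(n) ≥ k. -/

import Mathlib

/-- Inverting a set `X` in a digraph `D`: edges with both endpoints in `X`
are reversed, all other edges are unchanged. -/
def Invert {V : Type*} (D : V → V → Prop) (X : Set V) : V → V → Prop :=
  fun u v => (u ∈ X ∧ v ∈ X ∧ D v u) ∨ (¬(u ∈ X ∧ v ∈ X) ∧ D u v)

/-- A digraph is acyclic if it has no directed cycle. -/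
def IsAcyclic {V : Type*} (D : V → V → Prop) : Prop :=
  ∀ x : V, ¬ Relation.TransGen D x x

/-- A loopless digraph without digons (an oriented graph). -/
def IsOriented {V : Type*} (D : V → V → Prop) : Prop :=
  ∀ u v, D u v → ¬ D v u

/-- A tournament: an oriented graph with exactly one edge between any two
distinct vertices. -/
def IsTournament {V : Type*} (D : V → V → Prop) : Prop :=
  (∀ u v, D u v → ¬ D v u) ∧ ∀ u v, u ≠ v → D u v ∨ D v u

/-- The inversion number of a digraph: the minimum length of a decycling
family, i.e. a sequence of sets whose successive inversion makes `D` acyclic. -/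
noncomputable def invNum {V : Type*} (D : V → V → Prop) : ℕ :=
  sInf {k | ∃ Xs : List (Set V), Xs.length = k ∧ IsAcyclic (Xs.foldl Invert D)}

/-- The maximum inversion number of an `n`-vertex tournament. -/
noncomputable def maxInv (n : ℕ) : ℕ :=
  sSup {m | ∃ T : Fin n → Fin n → Prop, IsTournament T ∧ invNum T = m}

/-! Inverting a set is an involution, so every tournament is obtained from an acyclic one by
inverting the sets of any of its decycling families in reverse order. An acyclic tournament is
determined by the ranking of its vertices by in-degree, so there are at most `n!` of them. Hence if
every tournament on `n` vertices had a decycling family of length `k - 1`, there would be at most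
`n! · 2^{n(k-1)}` tournaments, fewer than the `2^{n(n-1)/2}` orientations of the pairs. The bound
`⌊(n-1)/2 - log₂ n⌋` follows from `n! ≤ nⁿ = 2^{n log₂ n}`. -/

section Tournament

variable {V : Type*} {D D' : V → V → Prop} {X : Set V} {u v : V}

theorem invert_apply_of_mem (hu : u ∈ X) (hv : v ∈ X) : Invert D X u v ↔ D v u := by
  simp [Invert, hu, hv]

theorem invert_apply_of_not_mem (h : ¬(u ∈ X ∧ v ∈ X)) : Invert D X u v ↔ D u v := by
  unfold Invert
  tauto

@[simp]
theorem invert_invert (D : V → V → Prop) (X : Set V) : Invert (Invert D X) X = D := by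
  funext u v
  by_cases h : u ∈ X ∧ v ∈ X
  · rw [invert_apply_of_mem h.1 h.2, invert_apply_of_mem h.2 h.1]
  · rw [invert_apply_of_not_mem h, invert_apply_of_not_mem h]

@[simp]
theorem invert_empty (D : V → V → Prop) : Invert D ∅ = D := by
  funext u v
  simp [Invert]

theorem foldl_invert_reverse (Xs : List (Set V)) (D : V → V → Prop) :
    Xs.reverse.foldl Invert (Xs.foldl Invert D) = D := by
  induction Xs generalizing D with
  | nil => rfl
  | cons X Xs ih => simp [ih]

theorem foldl_invert_replicate_empty (m : ℕ) (D : V → V → Prop) :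
    (List.replicate m ∅).foldl Invert D = D := by
  induction m with
  | zero => rfl
  | succ m ih => simp [List.replicate_succ', ih]

open Classical in
theorem foldl_invert_apply (Xs : List (Set V)) (D : V → V → Prop) (u v : V) :
    Xs.foldl Invert D u v ↔
      if Odd (Xs.countP fun X => u ∈ X ∧ v ∈ X) then D v u else D u v := by
  induction Xs generalizing D with
  | nil => simp
  | cons X Xs ih =>
    rw [List.foldl_cons, ih, List.countP_cons]
    by_cases h : u ∈ X ∧ v ∈ X
    · simp [invert_apply_of_mem h.1 h.2, invert_apply_of_mem h.2 h.1, h, Nat.odd_add_one,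
        -Nat.not_odd_iff_even, ite_not]
    · simp [invert_apply_of_not_mem h, invert_apply_of_not_mem (And.comm.not.mp h), h]

theorem IsTournament.irrefl (hD : IsTournament D) (u : V) : ¬ D u u :=
  fun h => hD.1 u u h h

theorem IsTournament.rel_iff_not_rel (hD : IsTournament D) (huv : u ≠ v) : D u v ↔ ¬ D v u :=
  ⟨hD.1 u v, (hD.2 u v huv).resolve_right⟩

theorem IsTournament.invert (hD : IsTournament D) (X : Set V) : IsTournament (Invert D X) := by
  refine ⟨fun u v => ?_, fun u v huv => ?_⟩ <;> by_cases h : u ∈ X ∧ v ∈ X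
  · rw [invert_apply_of_mem h.1 h.2, invert_apply_of_mem h.2 h.1]
    exact hD.1 v u
  · rw [invert_apply_of_not_mem h, invert_apply_of_not_mem (And.comm.not.mp h)]
    exact hD.1 u v
  · rw [invert_apply_of_mem h.1 h.2, invert_apply_of_mem h.2 h.1]
    exact (hD.2 u v huv).symm
  · rw [invert_apply_of_not_mem h, invert_apply_of_not_mem (And.comm.not.mp h)]
    exact hD.2 u v huv

theorem IsTournament.foldl_invert (hD : IsTournament D) (Xs : List (Set V)) :
    IsTournament (Xs.foldl Invert D) := by
  induction Xs generalizing D with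
  | nil => exact hD
  | cons X Xs ih => exact ih (hD.invert X)

theorem exists_foldl_invert_eq [Finite V] (hD : IsTournament D) (hD' : IsTournament D') :
    ∃ Xs : List (Set V), Xs.foldl Invert D = D' := by
  classical
  have := Fintype.ofFinite V
  -- the pairs on which `D` and `D'` disagree, each listed once, as `D` orients it
  let S := Finset.univ.filter fun p : V × V => D p.1 p.2 ∧ D' p.2 p.1
  let Xs := S.toList.map fun p => ({p.1, p.2} : Set V)
  have key : ∀ u v, D u v → (Xs.foldl Invert D u v ↔ D' u v) := by
    intro u v huv
    have hne : u ≠ v := fun h => hD.irrefl u (h ▸ huv)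
    have hcount : (Xs.countP fun X => u ∈ X ∧ v ∈ X) = S.toList.count (u, v) := by
      rw [List.countP_map]
      refine List.countP_congr fun p hp => ?_
      have hp := (Finset.mem_filter.mp (Finset.mem_toList.mp hp)).2
      simp only [Function.comp, Set.mem_insert_iff, Set.mem_singleton_iff, decide_eq_true_eq,
        beq_iff_eq, Prod.ext_iff]
      constructor
      · rintro ⟨rfl | rfl, rfl | rfl⟩
        all_goals first | exact absurd rfl hne | exact ⟨rfl, rfl⟩ | exact absurd huv (hD.1 _ _ hp.1)
      · rintro ⟨rfl, rfl⟩
        exact ⟨Or.inl rfl, Or.inr rfl⟩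
    rw [foldl_invert_apply, hcount]
    by_cases h' : D' u v
    · have : (u, v) ∉ S.toList := by simpa [S] using fun _ => hD'.1 u v h'
      simp [List.count_eq_zero_of_not_mem this, huv, h']
    · have : (u, v) ∈ S.toList := by
        simpa [S, huv] using (hD'.2 u v hne).resolve_left h'
      simp [List.count_eq_one_of_mem S.nodup_toList this, hD.1 u v huv, h']
  refine ⟨Xs, funext fun u => funext fun v => propext ?_⟩
  rcases eq_or_ne u v with rfl | huv
  · exact iff_of_false ((hD.foldl_invert Xs).irrefl u) (hD'.irrefl u)
  rcases hD.2 u v huv with h | h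
  · exact key u v h
  · rw [(hD.foldl_invert Xs).rel_iff_not_rel huv, hD'.rel_iff_not_rel huv, key v u h]

theorem isAcyclic_lt [Preorder V] : IsAcyclic (· < · : V → V → Prop) := by
  intro x h
  rw [Relation.transGen_eq_self] at h
  exact lt_irrefl x h

theorem isTournament_lt [LinearOrder V] : IsTournament (· < · : V → V → Prop) :=
  ⟨fun _ _ => lt_asymm, fun _ _ => lt_or_gt_of_ne⟩

theorem IsTournament.exists_isAcyclic_foldl_invert [Finite V] [LinearOrder V]
    (hD : IsTournament D) : ∃ Xs : List (Set V), IsAcyclic (Xs.foldl Invert D) := by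
  obtain ⟨Xs, hXs⟩ := exists_foldl_invert_eq hD isTournament_lt
  exact ⟨Xs, hXs ▸ isAcyclic_lt⟩

theorem IsTournament.exists_length_eq_of_invNum_le [Finite V] [LinearOrder V]
    (hD : IsTournament D) {m : ℕ} (hm : invNum D ≤ m) :
    ∃ Xs : List (Set V), Xs.length = m ∧ IsAcyclic (Xs.foldl Invert D) := by
  obtain ⟨Xs, hlen, hXs⟩ : invNum D ∈ {k | ∃ Xs : List (Set V), Xs.length = k ∧
      IsAcyclic (Xs.foldl Invert D)} :=
    let ⟨Xs, hXs⟩ := hD.exists_isAcyclic_foldl_invert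
    Nat.sInf_mem ⟨_, Xs, rfl, hXs⟩
  refine ⟨List.replicate (m - Xs.length) ∅ ++ Xs, by simp; omega, ?_⟩
  rwa [List.foldl_append, foldl_invert_replicate_empty]

theorem IsTournament.trans_of_isAcyclic (hD : IsTournament D) (hA : IsAcyclic D) {w : V}
    (huv : D u v) (hvw : D v w) : D u w := by
  have hne : u ≠ w := by
    rintro rfl
    exact hD.1 u v huv hvw
  refine (hD.2 u w hne).resolve_right fun hwu => hA u ?_
  exact .head huv (.head hvw (.single hwu))

noncomputable def inDegree (D : V → V → Prop) (v : V) : ℕ :=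
  {u | D u v}.ncard

theorem inDegree_lt_card [Finite V] (hD : IsTournament D) (v : V) : inDegree D v < Nat.card V :=
  Set.ncard_lt_card fun h => hD.irrefl v (h.symm ▸ Set.mem_univ v : v ∈ {u | D u v})

theorem IsTournament.rel_iff_inDegree_lt [Finite V] (hD : IsTournament D) (hA : IsAcyclic D) :
    D u v ↔ inDegree D u < inDegree D v := by
  have inDegree_lt : ∀ {u v}, D u v → inDegree D u < inDegree D v := fun {u v} huv =>
    Set.ncard_lt_ncard ⟨fun _ hw => hD.trans_of_isAcyclic hA hw huv,
      fun h => hD.irrefl u (h (show u ∈ {w | D w v} from huv))⟩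
  refine ⟨inDegree_lt, fun h => ?_⟩
  have hne : u ≠ v := by
    rintro rfl
    exact lt_irrefl _ h
  exact (hD.2 u v hne).resolve_right fun hvu => (inDegree_lt hvu).not_gt h

theorem card_acyclic_tournaments_le [Finite V] :
    Nat.card {D : V → V → Prop // IsTournament D ∧ IsAcyclic D} ≤ (Nat.card V).factorial := by
  classical
  have := Fintype.ofFinite V
  let ranking (A : {D : V → V → Prop // IsTournament D ∧ IsAcyclic D}) : V ↪ Fin (Nat.card V) :=
    ⟨fun v => ⟨inDegree A.1 v, inDegree_lt_card A.2.1 v⟩, fun u v h => by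
      by_contra hne
      rcases A.2.1.2 u v hne with huv | hvu
      · exact ((A.2.1.rel_iff_inDegree_lt A.2.2).mp huv).ne (Fin.val_eq_of_eq h)
      · exact ((A.2.1.rel_iff_inDegree_lt A.2.2).mp hvu).ne (Fin.val_eq_of_eq h.symm)⟩
  have ranking_injective : Function.Injective ranking := fun A B h => by
    have hdeg (v : V) : inDegree A.1 v = inDegree B.1 v := Fin.val_eq_of_eq (DFunLike.congr_fun h v)
    ext u v
    rw [A.2.1.rel_iff_inDegree_lt A.2.2, B.2.1.rel_iff_inDegree_lt B.2.2, hdeg, hdeg]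
  calc Nat.card {D : V → V → Prop // IsTournament D ∧ IsAcyclic D}
      ≤ Nat.card (V ↪ Fin (Nat.card V)) := Nat.card_le_card_of_injective _ ranking_injective
    _ = (Nat.card V).factorial := by
      simp [Nat.card_eq_fintype_card, Fintype.card_embedding_eq, Nat.descFactorial_self]

theorem card_tournaments_le_of_forall_exists_decycling [Finite V] {m : ℕ}
    (h : ∀ D : V → V → Prop, IsTournament D →
      ∃ Xs : List (Set V), Xs.length = m ∧ IsAcyclic (Xs.foldl Invert D)) :
    Nat.card {D : V → V → Prop // IsTournament D} ≤
      (Nat.card V).factorial * 2 ^ (Nat.card V * m) := by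
  classical
  have := Fintype.ofFinite V
  let build (AXs : {A : V → V → Prop // IsTournament A ∧ IsAcyclic A} × List.Vector (Set V) m) :
      {D : V → V → Prop // IsTournament D} :=
    ⟨AXs.2.toList.foldl Invert AXs.1.1, AXs.1.2.1.foldl_invert _⟩
  have build_surjective : Function.Surjective build := fun ⟨D, hD⟩ => by
    obtain ⟨Xs, hlen, hA⟩ := h D hD
    exact ⟨(⟨_, hD.foldl_invert Xs, hA⟩, ⟨Xs.reverse, by simpa using hlen⟩),
      Subtype.ext (foldl_invert_reverse Xs D)⟩
  calc Nat.card {D : V → V → Prop // IsTournament D}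
      ≤ Nat.card ({A : V → V → Prop // IsTournament A ∧ IsAcyclic A} ×
          List.Vector (Set V) m) := Nat.card_le_card_of_surjective _ build_surjective
    _ ≤ (Nat.card V).factorial * 2 ^ (Nat.card V * m) := by
      rw [Nat.card_prod]
      gcongr
      · exact card_acyclic_tournaments_le
      · simp [Nat.card_eq_fintype_card, card_vector, Fintype.card_set, pow_mul]

def ofOrientation [LinearOrder V] (g : {p : V × V // p.1 < p.2} → Prop) : V → V → Prop :=
  fun u v => (∃ h : u < v, g ⟨(u, v), h⟩) ∨ ∃ h : v < u, ¬ g ⟨(v, u), h⟩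

theorem isTournament_ofOrientation [LinearOrder V] (g : {p : V × V // p.1 < p.2} → Prop) :
    IsTournament (ofOrientation g) := by
  refine ⟨?_, fun u v huv => ?_⟩
  · rintro u v (⟨h, hg⟩ | ⟨h, hg⟩) (⟨h', hg'⟩ | ⟨h', hg'⟩)
    exacts [lt_asymm h h', hg' hg, hg hg', lt_asymm h h']
  · rcases huv.lt_or_gt with h | h
    · by_cases hg : g ⟨(u, v), h⟩
      exacts [.inl (.inl ⟨h, hg⟩), .inr (.inr ⟨h, hg⟩)]
    · by_cases hg : g ⟨(v, u), h⟩
      exacts [.inr (.inl ⟨h, hg⟩), .inl (.inr ⟨h, hg⟩)]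

theorem ofOrientation_injective [LinearOrder V] :
    Function.Injective (ofOrientation : ({p : V × V // p.1 < p.2} → Prop) → V → V → Prop) := by
  intro g g' h
  funext p
  have (g : {p : V × V // p.1 < p.2} → Prop) : ofOrientation g p.1.1 p.1.2 ↔ g p := by
    simp [ofOrientation, p.2, not_lt_of_gt p.2]
  rw [← this g, ← this g', h]

theorem two_pow_choose_two_le_card_tournaments [Finite V] [LinearOrder V] :
    2 ^ (Nat.card V).choose 2 ≤ Nat.card {D : V → V → Prop // IsTournament D} := by
  classical
  have := Fintype.ofFinite V
  calc 2 ^ (Nat.card V).choose 2 = Nat.card ({p : V × V // p.1 < p.2} → Prop) := by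
        simp [Nat.card_eq_fintype_card, Fintype.card_subtype, Fintype.card_product_filter_lt]
    _ ≤ Nat.card {D : V → V → Prop // IsTournament D} :=
      Nat.card_le_card_of_injective (fun g => ⟨_, isTournament_ofOrientation g⟩)
        fun g g' h => ofOrientation_injective (congrArg Subtype.val h)

end Tournament

theorem invNum_le_maxInv {n : ℕ} {T : Fin n → Fin n → Prop} (hT : IsTournament T) :
    invNum T ≤ maxInv n := by
  refine le_csSup (Set.Finite.bddAbove ?_) ⟨T, hT, rfl⟩
  refine (Set.finite_range fun T : Fin n → Fin n → Prop => invNum T).subset ?_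
  rintro _ ⟨T, -, rfl⟩
  exact ⟨T, rfl⟩

theorem le_maxInv_of_factorial_mul_two_pow_lt {n k : ℕ}
    (h : n.factorial * 2 ^ (n * (k - 1)) < 2 ^ n.choose 2) : k ≤ maxInv n := by
  by_contra! hlt
  have hdecycle (T : Fin n → Fin n → Prop) (hT : IsTournament T) :
      ∃ Xs : List (Set (Fin n)), Xs.length = k - 1 ∧ IsAcyclic (Xs.foldl Invert T) :=
    hT.exists_length_eq_of_invNum_le (by have := invNum_le_maxInv hT; omega)
  have hupper := card_tournaments_le_of_forall_exists_decycling hdecycle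
  have hlower := two_pow_choose_two_le_card_tournaments (V := Fin n)
  rw [Nat.card_fin] at hupper hlower
  exact (hlower.trans hupper).not_gt h

theorem factorial_mul_two_pow_lt_two_pow_choose_two {n j : ℕ}
    (h : (j : ℝ) + 1 ≤ ((n : ℝ) - 1) / 2 - Real.logb 2 n) :
    n.factorial * 2 ^ (n * j) < 2 ^ n.choose 2 := by
  have hn : 0 < n := by
    by_contra! hn
    obtain rfl : n = 0 := by omega
    norm_num at h
    linarith [(j.cast_nonneg : (0 : ℝ) ≤ j)]
  have hbase : (n : ℝ) * 2 ^ j < (2 : ℝ) ^ (((n : ℝ) - 1) / 2) := by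
    calc (n : ℝ) * 2 ^ j = (2 : ℝ) ^ (Real.logb 2 n + j) := by
          rw [Real.rpow_add two_pos, Real.rpow_logb two_pos (by norm_num) (by positivity),
            Real.rpow_natCast]
      _ < (2 : ℝ) ^ (((n : ℝ) - 1) / 2) := Real.rpow_lt_rpow_of_exponent_lt one_lt_two (by linarith)
  have : (n.factorial : ℝ) * 2 ^ (n * j) < 2 ^ n.choose 2 := by
    calc (n.factorial : ℝ) * 2 ^ (n * j) ≤ (n : ℝ) ^ n * 2 ^ (n * j) := by
          gcongr
          exact_mod_cast Nat.factorial_le_pow n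
      _ = ((n : ℝ) * 2 ^ j) ^ n := by ring
      _ < ((2 : ℝ) ^ (((n : ℝ) - 1) / 2)) ^ n := pow_lt_pow_left₀ hbase (by positivity) hn.ne'
      _ = 2 ^ n.choose 2 := by
        rw [← Real.rpow_natCast, ← Real.rpow_mul zero_le_two, ← Real.rpow_natCast 2,
          Nat.cast_choose_two]
        ring_nf
  exact_mod_cast this

theorem maxInv_lower_bound_general (n : ℕ) :
    (∀ k : ℕ, 1 ≤ k →
      n.factorial * 2 ^ (n * (k - 1)) < 2 ^ (n * (n - 1) / 2) →
      k ≤ maxInv n) ∧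
    ⌊((n : ℝ) - 1) / 2 - Real.logb 2 n⌋ ≤ (maxInv n : ℤ) := by
  refine ⟨fun k _ h => le_maxInv_of_factorial_mul_two_pow_lt (Nat.choose_two_right n ▸ h), ?_⟩
  rcases le_or_gt ⌊((n : ℝ) - 1) / 2 - Real.logb 2 n⌋ 0 with hneg | hpos
  · exact hneg.trans (Int.natCast_nonneg _)
  obtain ⟨k, hk⟩ := Int.eq_ofNat_of_zero_le hpos.le
  have hk_le : ((k - 1 : ℕ) : ℝ) + 1 ≤ ((n : ℝ) - 1) / 2 - Real.logb 2 n := by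
    have := Int.floor_le (((n : ℝ) - 1) / 2 - Real.logb 2 n)
    rw [hk] at this
    rw [Nat.cast_sub (by omega)]
    push_cast at this ⊢
    linarith
  rw [hk]
  exact_mod_cast le_maxInv_of_factorial_mul_two_pow_lt
    (factorial_mul_two_pow_lt_two_pow_choose_two hk_le)

/-- If `2^{n(n−1)/2} > n! · 2^{n(k−1)}` then `inv(n) ≥ k`; consequently
`inv(n) ≥ ⌊(n−1)/2 − log₂ n⌋`. -/
theorem maxInv_lower_bound (n : ℕ) (hn : 1 ≤ n) :
    (∀ k : ℕ, 1 ≤ k →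
      n.factorial * 2 ^ (n * (k - 1)) < 2 ^ (n * (n - 1) / 2) →
      k ≤ maxInv n) ∧
    ⌊((n : ℝ) - 1) / 2 - Real.logb 2 n⌋ ≤ (maxInv n : ℤ) :=
  maxInv_lower_bound_general n
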